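/- Let f : ℝ^d → ℝ be μ-strongly convex (μ > 0) and L-smooth, let A be a real m×d matrix, let M be a real m×m symmetric positive semidefinite matrix, and let ρ > 0. Define Φ : ℝ^m → ℝ by Φ(λ) = sup_{x∈ℝ^d} (−⟨λ, A x⟩ − f(x)) + (ρ/2)⟨λ, Mλ⟩. Then Φ is differentiable and for all λ, λ' ∈ ℝ^m, ⟨∇Φ(λ) − ∇Φ(λ'), λ − λ'⟩ ≥ (1/L)·(λ − λ')ᵀ(AAᵀ + ρ L M)(λ − λ'). In particular, if AAᵀ + ρ L M is positive definite, then Φ is (λmin(AAᵀ + ρ L M)/L)-strongly convex, where λmin denotes the smallest eigenvalue. -/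

import Mathlib

/-!
Write `Φ = D + (ρ/2)⟪·, M ·⟫`, where `D λ = sup_x (-⟪λ, A x⟫ - f x)` is the dual function.
Since `f` is strongly convex, its gradient is onto, so the supremum is attained at the point `x(λ)`
with `∇f (x(λ)) = -Aᵀλ`; comparing the values at `x(λ)` and `x(λ + h)` gives
`0 ≤ D(λ + h) - D λ + ⟪A x(λ), h⟫ ≤ ‖Aᵀh‖² / μ`, so `∇D λ = -A x(λ)`. Hence
`⟪∇Φ λ - ∇Φ λ', λ - λ'⟫ = ⟪∇f x' - ∇f x, x' - x⟫ + ρ⟪M(λ - λ'), λ - λ'⟫` with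
`∇f x' - ∇f x = Aᵀ(λ - λ')`, and the Baillon–Haddad cocoercivity
`‖∇f x' - ∇f x‖² ≤ L ⟪∇f x' - ∇f x, x' - x⟫` of the `L`-smooth convex `f` gives the bound.
Strong convexity then follows from the strongly monotone gradient and the Rayleigh quotient bound.
-/

open scoped RealInnerProductSpace
open Matrix

/-- The smallest eigenvalue of a symmetric matrix, as the infimum of the Rayleigh
quotient over unit vectors. -/
noncomputable def lambdaMin {m : ℕ} (M : Matrix (Fin m) (Fin m) ℝ) : ℝ :=
  sInf ((fun v : EuclideanSpace ℝ (Fin m) => ⟪Matrix.toEuclideanLin M v, v⟫) '' {v | ‖v‖ = 1})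

open Set InnerProductSpace

section GradientCalculus

variable {E : Type*} [NormedAddCommGroup E] [InnerProductSpace ℝ E] [CompleteSpace E]
  {f g : E → ℝ} {f' g' x : E}

theorem HasGradientAt.add (hf : HasGradientAt f f' x) (hg : HasGradientAt g g' x) :
    HasGradientAt (fun z => f z + g z) (f' + g') x := by
  rw [hasGradientAt_iff_hasFDerivAt, map_add] at *
  exact hf.add hg

theorem HasGradientAt.sub (hf : HasGradientAt f f' x) (hg : HasGradientAt g g' x) :
    HasGradientAt (fun z => f z - g z) (f' - g') x := by
  rw [hasGradientAt_iff_hasFDerivAt, map_sub] at *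
  exact hf.sub hg

theorem hasGradientAt_inner_left (c x : E) : HasGradientAt (fun z => ⟪c, z⟫) c x :=
  hasGradientAt_iff_hasFDerivAt.2 (toDual ℝ E c).hasFDerivAt

theorem hasGradientAt_half_mul_norm_sq (c : ℝ) (x : E) :
    HasGradientAt (fun z => c / 2 * ‖z‖ ^ 2) (c • x) x := by
  refine hasGradientAt_iff_hasFDerivAt.2
    (((hasStrictFDerivAt_norm_sq x).hasFDerivAt.const_mul (c / 2)).congr_fderiv ?_)
  ext v
  simp only [_root_.smul_apply, coe_innerSL_apply, nsmul_eq_mul, Nat.cast_ofNat, smul_eq_mul,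
    map_smul, toDual_apply_apply]
  ring

theorem HasGradientAt.hasDerivAt_comp_lineMap {y : E} {t : ℝ}
    (hf : HasGradientAt f f' (AffineMap.lineMap x y t)) :
    HasDerivAt (fun s => f (AffineMap.lineMap x y s)) ⟪f', y - x⟫ t := by
  have := (hasGradientAt_iff_hasFDerivAt.1 hf).comp_hasDerivAt t AffineMap.hasDerivAt_lineMap
  rwa [toDual_apply_apply] at this

end GradientCalculus

section ConvexGradient

variable {E : Type*} [NormedAddCommGroup E] [InnerProductSpace ℝ E] [CompleteSpace E]
  {f : E → ℝ} {f' : E → E} {μ L : ℝ}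

theorem ConvexOn.add_inner_le_of_hasGradientAt (hconv : ConvexOn ℝ univ f)
    (hf : ∀ x, HasGradientAt f (f' x) x) (x y : E) : f x + ⟪f' x, y - x⟫ ≤ f y := by
  have hline : ConvexOn ℝ univ (fun s : ℝ => f (AffineMap.lineMap x y s)) :=
    hconv.comp_affineMap (AffineMap.lineMap x y)
  have hderiv := (hf (AffineMap.lineMap x y (0 : ℝ))).hasDerivAt_comp_lineMap
  have := hline.le_slope_of_hasDerivAt (mem_univ 0) (mem_univ 1) one_pos hderiv
  simp only [AffineMap.lineMap_apply_zero, AffineMap.lineMap_apply_one, slope_def_field] at this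
  linarith

theorem convexOn_univ_of_inner_sub_nonneg (hf : ∀ x, HasGradientAt f (f' x) x)
    (hmono : ∀ x y, 0 ≤ ⟪f' x - f' y, x - y⟫) : ConvexOn ℝ univ f := by
  refine ⟨convex_univ, fun x _ y _ a b ha hb hab => ?_⟩
  have hderiv (t : ℝ) := (hf (AffineMap.lineMap x y t)).hasDerivAt_comp_lineMap (t := t)
  have hline : ConvexOn ℝ univ (fun s : ℝ => f (AffineMap.lineMap x y s)) := by
    refine Monotone.convexOn_univ_of_deriv (fun t => (hderiv t).differentiableAt) ?_
    intro s t hst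
    simp only [(hderiv _).deriv]
    rcases hst.eq_or_lt with rfl | hlt
    · exact le_rfl
    have hdiff : AffineMap.lineMap x y t - AffineMap.lineMap x y s = (t - s) • (y - x) := by
      simp only [AffineMap.lineMap_apply_module', add_sub_add_right_eq_sub, sub_smul]
    have h := hmono (AffineMap.lineMap x y t) (AffineMap.lineMap x y s)
    rw [hdiff, real_inner_smul_right, inner_sub_left] at h
    linarith [(mul_nonneg_iff_of_pos_left (sub_pos.2 hlt)).1 h]
  have := hline.2 (mem_univ 0) (mem_univ 1) ha hb hab
  simpa [AffineMap.lineMap_apply_module, show 1 - b = a by linarith] using this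

theorem StrongConvexOn.add_inner_add_le_of_hasGradientAt (hsc : StrongConvexOn univ μ f)
    (hf : ∀ x, HasGradientAt f (f' x) x) (x y : E) :
    f x + ⟪f' x, y - x⟫ + μ / 2 * ‖y - x‖ ^ 2 ≤ f y := by
  have h := (strongConvexOn_iff_convex.1 hsc).add_inner_le_of_hasGradientAt
    (fun z => (hf z).sub (hasGradientAt_half_mul_norm_sq μ z)) x y
  have hy := norm_add_sq_real x (y - x)
  rw [add_sub_cancel] at hy
  rw [inner_sub_left, real_inner_smul_left] at h
  linear_combination h - μ / 2 * hy

theorem StrongConvexOn.mul_sq_le_inner_sub_of_hasGradientAt (hsc : StrongConvexOn univ μ f)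
    (hf : ∀ x, HasGradientAt f (f' x) x) (x y : E) :
    μ * ‖x - y‖ ^ 2 ≤ ⟪f' x - f' y, x - y⟫ := by
  have hxy := hsc.add_inner_add_le_of_hasGradientAt hf x y
  have hyx := hsc.add_inner_add_le_of_hasGradientAt hf y x
  rw [norm_sub_rev y x, ← neg_sub x y, inner_neg_right] at hxy
  rw [inner_sub_left]
  linarith

theorem StrongConvexOn.mul_norm_sub_le_norm_sub_of_hasGradientAt (hsc : StrongConvexOn univ μ f)
    (hf : ∀ x, HasGradientAt f (f' x) x) (x y : E) :
    μ * ‖x - y‖ ≤ ‖f' x - f' y‖ := by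
  rcases (norm_nonneg (x - y)).eq_or_lt with h | h
  · rw [← h, mul_zero]
    exact norm_nonneg _
  refine le_of_mul_le_mul_right ?_ h
  calc μ * ‖x - y‖ * ‖x - y‖ = μ * ‖x - y‖ ^ 2 := by ring
    _ ≤ ⟪f' x - f' y, x - y⟫ := hsc.mul_sq_le_inner_sub_of_hasGradientAt hf x y
    _ ≤ ‖f' x - f' y‖ * ‖x - y‖ := real_inner_le_norm _ _

theorem ConvexOn.inner_sub_nonneg_of_hasGradientAt (hconv : ConvexOn ℝ univ f)
    (hf : ∀ x, HasGradientAt f (f' x) x) (x y : E) : 0 ≤ ⟪f' x - f' y, x - y⟫ := by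
  simpa using (strongConvexOn_zero.2 hconv).mul_sq_le_inner_sub_of_hasGradientAt hf x y

theorem le_add_inner_add_of_lipschitz_gradient (hf : ∀ x, HasGradientAt f (f' x) x)
    (hlip : ∀ x y, ‖f' x - f' y‖ ≤ L * ‖x - y‖) (x y : E) :
    f y ≤ f x + ⟪f' x, y - x⟫ + L / 2 * ‖y - x‖ ^ 2 := by
  set ψ : ℝ → ℝ := fun t =>
    f (AffineMap.lineMap x y t) - t * ⟪f' x, y - x⟫ - L / 2 * t ^ 2 * ‖y - x‖ ^ 2
  have hψ (t : ℝ) : HasDerivAt ψ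
      (⟪f' (AffineMap.lineMap x y t), y - x⟫ - ⟪f' x, y - x⟫ - L * t * ‖y - x‖ ^ 2) t := by
    have := (((hf (AffineMap.lineMap x y t)).hasDerivAt_comp_lineMap).sub
      ((hasDerivAt_id t).mul_const ⟪f' x, y - x⟫)).sub
      (((hasDerivAt_pow 2 t).const_mul (L / 2)).mul_const (‖y - x‖ ^ 2))
    exact this.congr_deriv (by ring)
  have hanti : AntitoneOn ψ (Ici 0) := by
    refine antitoneOn_of_deriv_nonpos (convex_Ici 0)
      (fun t _ => (hψ t).continuousAt.continuousWithinAt)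
      (fun t _ => (hψ t).differentiableAt.differentiableWithinAt) fun t ht => ?_
    rw [interior_Ici, mem_Ioi] at ht
    have hstep : AffineMap.lineMap x y t - x = t • (y - x) := by
      rw [AffineMap.lineMap_apply_module', add_sub_cancel_right]
    have hbound : ⟪f' (AffineMap.lineMap x y t) - f' x, y - x⟫ ≤ L * t * ‖y - x‖ ^ 2 :=
      calc _ ≤ ‖f' (AffineMap.lineMap x y t) - f' x‖ * ‖y - x‖ := real_inner_le_norm _ _
        _ ≤ L * ‖AffineMap.lineMap x y t - x‖ * ‖y - x‖ := by gcongr; exact hlip _ _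
        _ = L * t * ‖y - x‖ ^ 2 := by
          rw [hstep, norm_smul, Real.norm_of_nonneg ht.le]; ring
    rw [(hψ t).deriv]
    rw [inner_sub_left] at hbound
    linarith
  have := hanti (mem_Ici.2 le_rfl) (zero_le_one' ℝ) zero_le_one
  simp only [ψ, AffineMap.lineMap_apply_zero, AffineMap.lineMap_apply_one] at this
  linarith

theorem ConvexOn.add_inner_add_sq_le_of_lipschitz_gradient (hconv : ConvexOn ℝ univ f)
    (hf : ∀ x, HasGradientAt f (f' x) x) (hlip : ∀ x y, ‖f' x - f' y‖ ≤ L * ‖x - y‖)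
    (hL : 0 < L) (x y : E) :
    f x + ⟪f' x, y - x⟫ + (2 * L)⁻¹ * ‖f' y - f' x‖ ^ 2 ≤ f y := by
  -- `φ` is minimized at `x`; compare with one gradient step from `y`.
  set φ : E → ℝ := fun z => f z - ⟪f' x, z⟫
  have hφ (z : E) : HasGradientAt φ (f' z - f' x) z := (hf z).sub (hasGradientAt_inner_left _ z)
  have hφconv : ConvexOn ℝ univ φ := convexOn_univ_of_inner_sub_nonneg hφ fun a b => by
    simpa using hconv.inner_sub_nonneg_of_hasGradientAt hf a b
  have hφlip (a b : E) : ‖(f' a - f' x) - (f' b - f' x)‖ ≤ L * ‖a - b‖ := by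
    simpa using hlip a b
  have hmin := hφconv.add_inner_le_of_hasGradientAt hφ x (y - L⁻¹ • (f' y - f' x))
  have hstep := le_add_inner_add_of_lipschitz_gradient hφ hφlip y (y - L⁻¹ • (f' y - f' x))
  simp only [sub_self, inner_zero_left, add_zero, sub_sub_cancel_left, inner_neg_right,
    norm_neg, real_inner_smul_right, norm_smul, real_inner_self_eq_norm_sq, φ] at hmin hstep
  rw [Real.norm_of_nonneg (inv_nonneg.2 hL.le)] at hstep
  rw [inner_sub_right]
  have h₁ : L / 2 * (L⁻¹ * ‖f' y - f' x‖) ^ 2 = (2 * L)⁻¹ * ‖f' y - f' x‖ ^ 2 := by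
    field_simp
  have h₂ : L⁻¹ * ‖f' y - f' x‖ ^ 2 = 2 * ((2 * L)⁻¹ * ‖f' y - f' x‖ ^ 2) := by
    field_simp
  linarith

theorem ConvexOn.inv_mul_sq_le_inner_sub_of_lipschitz_gradient (hconv : ConvexOn ℝ univ f)
    (hf : ∀ x, HasGradientAt f (f' x) x) (hlip : ∀ x y, ‖f' x - f' y‖ ≤ L * ‖x - y‖) (x y : E) :
    L⁻¹ * ‖f' x - f' y‖ ^ 2 ≤ ⟪f' x - f' y, x - y⟫ := by
  rcases le_or_gt L 0 with hL | hL
  · exact (mul_nonpos_of_nonpos_of_nonneg (inv_nonpos.2 hL) (sq_nonneg _)).trans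
      (hconv.inner_sub_nonneg_of_hasGradientAt hf x y)
  have hxy := hconv.add_inner_add_sq_le_of_lipschitz_gradient hf hlip hL x y
  have hyx := hconv.add_inner_add_sq_le_of_lipschitz_gradient hf hlip hL y x
  rw [norm_sub_rev (f' y), ← neg_sub x y, inner_neg_right] at hxy
  rw [inner_sub_left, show L⁻¹ = 2 * (2 * L)⁻¹ by field_simp]
  linarith

theorem strongConvexOn_univ_of_mul_sq_le_inner_sub (hf : ∀ x, HasGradientAt f (f' x) x)
    (hmono : ∀ x y, μ * ‖x - y‖ ^ 2 ≤ ⟪f' x - f' y, x - y⟫) : StrongConvexOn univ μ f := by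
  rw [strongConvexOn_iff_convex]
  refine convexOn_univ_of_inner_sub_nonneg
    (fun z => (hf z).sub (hasGradientAt_half_mul_norm_sq μ z)) fun x y => ?_
  have h := hmono x y
  rw [sub_sub_sub_comm, ← smul_sub, inner_sub_left, real_inner_smul_left,
    real_inner_self_eq_norm_sq]
  linarith

end ConvexGradient

section Minimizer

variable {E : Type*} [NormedAddCommGroup E] [InnerProductSpace ℝ E] [FiniteDimensional ℝ E]
  {f : E → ℝ} {f' : E → E} {μ : ℝ}

theorem StrongConvexOn.exists_forall_le_of_hasGradientAt (hμ : 0 < μ)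
    (hsc : StrongConvexOn univ μ f) (hf : ∀ x, HasGradientAt f (f' x) x) :
    ∃ x, ∀ y, f x ≤ f y := by
  have hcont : Continuous f := Differentiable.continuous fun x => (hf x).differentiableAt
  refine hcont.exists_forall_le' 0 ?_
  filter_upwards [tendsto_norm_cocompact_atTop.eventually
    (Filter.eventually_ge_atTop (2 * ‖f' 0‖ / μ))] with y hy
  have h := hsc.add_inner_add_le_of_hasGradientAt hf 0 y
  rw [sub_zero] at h
  have hcs := (abs_le.1 (abs_real_inner_le_norm (f' 0) y)).1
  rw [div_le_iff₀ hμ] at hy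
  nlinarith [norm_nonneg y]

theorem StrongConvexOn.surjective_of_hasGradientAt (hμ : 0 < μ) (hsc : StrongConvexOn univ μ f)
    (hf : ∀ x, HasGradientAt f (f' x) x) : Function.Surjective f' := by
  intro c
  have hg (z : E) : HasGradientAt (fun x => f x - ⟪c, x⟫) (f' z - c) z :=
    (hf z).sub (hasGradientAt_inner_left c z)
  have hgsc : StrongConvexOn univ μ (fun x => f x - ⟪c, x⟫) :=
    strongConvexOn_univ_of_mul_sq_le_inner_sub hg fun x y => by
      simpa using hsc.mul_sq_le_inner_sub_of_hasGradientAt hf x y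
  obtain ⟨x, hx⟩ := hgsc.exists_forall_le_of_hasGradientAt hμ hg
  have hcrit := ((isMinOn_univ_iff.2 hx).isLocalMin Filter.univ_mem).hasFDerivAt_eq_zero
    (hasGradientAt_iff_hasFDerivAt.1 (hg x))
  rw [LinearIsometryEquiv.map_eq_zero_iff, sub_eq_zero] at hcrit
  exact ⟨x, hcrit⟩

end Minimizer

section QuadraticForm

variable {W : Type*} [NormedAddCommGroup W] [InnerProductSpace ℝ W] [FiniteDimensional ℝ W]

theorem LinearMap.IsSymmetric.hasGradientAt_half_mul_inner_apply {T : W →ₗ[ℝ] W}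
    (hT : T.IsSymmetric) (c : ℝ) (x : W) :
    HasGradientAt (fun z => c / 2 * ⟪z, T z⟫) (c • T x) x := by
  have h := ((hasFDerivAt_id x).inner ℝ T.toContinuousLinearMap.hasFDerivAt).const_mul (c / 2)
  refine hasGradientAt_iff_hasFDerivAt.2 (h.congr_fderiv ?_)
  ext v
  simp only [id_eq, coe_toContinuousLinearMap', _root_.smul_apply, ContinuousLinearMap.comp_apply,
    ContinuousLinearMap.prod_apply, ContinuousLinearMap.id_apply, fderivInnerCLM_apply,
    real_inner_comm (T x) v, hT x v, smul_eq_mul, map_smul, toDual_apply_apply]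
  ring

end QuadraticForm

section DualFunction

variable {E W : Type*} [NormedAddCommGroup E] [InnerProductSpace ℝ E] [FiniteDimensional ℝ E]
  [NormedAddCommGroup W] [InnerProductSpace ℝ W] [FiniteDimensional ℝ W]
  {f : E → ℝ} {f' : E → E} {μ : ℝ} {A : E →ₗ[ℝ] W}

noncomputable def dualFunction (f : E → ℝ) (A : E →ₗ[ℝ] W) (l : W) : ℝ :=
  ⨆ x, (-⟪l, A x⟫ - f x)

theorem ConvexOn.neg_inner_sub_le_of_hasGradientAt_eq (hconv : ConvexOn ℝ univ f)
    (hf : ∀ x, HasGradientAt f (f' x) x) {l : W} {x : E} (hx : f' x = -A.adjoint l) (z : E) :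
    -⟪l, A z⟫ - f z ≤ -⟪l, A x⟫ - f x := by
  have h := hconv.add_inner_le_of_hasGradientAt hf x z
  rw [hx, inner_neg_left, LinearMap.adjoint_inner_left, map_sub, inner_sub_right] at h
  linarith

theorem ConvexOn.dualFunction_eq_of_hasGradientAt_eq (hconv : ConvexOn ℝ univ f)
    (hf : ∀ x, HasGradientAt f (f' x) x) {l : W} {x : E} (hx : f' x = -A.adjoint l) :
    dualFunction f A l = -⟪l, A x⟫ - f x :=
  have hle := hconv.neg_inner_sub_le_of_hasGradientAt_eq hf hx
  le_antisymm (ciSup_le hle) (le_ciSup ⟨_, forall_mem_range.2 hle⟩ x)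

theorem StrongConvexOn.dualFunction_add_sub_bounds (hμ : 0 < μ) (hsc : StrongConvexOn univ μ f)
    (hf : ∀ x, HasGradientAt f (f' x) x) {xs : W → E} (hxs : ∀ l, f' (xs l) = -A.adjoint l)
    (l h : W) :
    0 ≤ dualFunction f A (l + h) - dualFunction f A l + ⟪A (xs l), h⟫ ∧
      dualFunction f A (l + h) - dualFunction f A l + ⟪A (xs l), h⟫ ≤ ‖A.adjoint h‖ ^ 2 / μ := by
  have hconv : ConvexOn ℝ univ f := hsc.convexOn fun r => by positivity
  have hlow := hconv.neg_inner_sub_le_of_hasGradientAt_eq hf (hxs (l + h)) (xs l)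
  have hup := hconv.neg_inner_sub_le_of_hasGradientAt_eq hf (hxs l) (xs (l + h))
  have hclose : μ * ‖xs l - xs (l + h)‖ ≤ ‖A.adjoint h‖ := by
    simpa [hxs] using hsc.mul_norm_sub_le_norm_sub_of_hasGradientAt hf (xs l) (xs (l + h))
  have hcs : ⟪h, A (xs l - xs (l + h))⟫ ≤ ‖A.adjoint h‖ * ‖xs l - xs (l + h)‖ := by
    rw [← LinearMap.adjoint_inner_left]
    exact real_inner_le_norm _ _
  rw [hconv.dualFunction_eq_of_hasGradientAt_eq hf (hxs (l + h)),
    hconv.dualFunction_eq_of_hasGradientAt_eq hf (hxs l), real_inner_comm h]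
  simp only [inner_add_left] at hlow ⊢
  rw [map_sub, inner_sub_right] at hcs
  constructor
  · linarith
  · rw [le_div_iff₀ hμ]
    nlinarith [norm_nonneg (A.adjoint h)]

theorem StrongConvexOn.hasGradientAt_dualFunction (hμ : 0 < μ) (hsc : StrongConvexOn univ μ f)
    (hf : ∀ x, HasGradientAt f (f' x) x) {xs : W → E} (hxs : ∀ l, f' (xs l) = -A.adjoint l)
    (l : W) : HasGradientAt (dualFunction f A) (-A (xs l)) l := by
  set T := LinearMap.toContinuousLinearMap A.adjoint
  rw [hasGradientAt_iff_isLittleO_nhds_zero]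
  refine (Asymptotics.IsBigO.of_bound (‖T‖ ^ 2 / μ) (Filter.Eventually.of_forall fun h => ?_)
    ).trans_isLittleO (Asymptotics.isLittleO_norm_pow_id one_lt_two)
  obtain ⟨hlow, hup⟩ := hsc.dualFunction_add_sub_bounds hμ hf hxs l h
  have hT : ‖A.adjoint h‖ ≤ ‖T‖ * ‖h‖ := T.le_opNorm h
  rw [inner_neg_left, sub_neg_eq_add, Real.norm_of_nonneg hlow, norm_pow, norm_norm,
    div_mul_eq_mul_div, ← mul_pow]
  refine hup.trans (div_le_div_of_nonneg_right ?_ hμ.le)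
  gcongr

end DualFunction

section RegularizedDualFunction

variable {E W : Type*} [NormedAddCommGroup E] [InnerProductSpace ℝ E] [FiniteDimensional ℝ E]
  [NormedAddCommGroup W] [InnerProductSpace ℝ W] [FiniteDimensional ℝ W]
  {f : E → ℝ} {f' : E → E} {μ ρ L : ℝ} {A : E →ₗ[ℝ] W} {M : W →ₗ[ℝ] W}

noncomputable def regularizedDualFunction (f : E → ℝ) (A : E →ₗ[ℝ] W) (M : W →ₗ[ℝ] W) (ρ : ℝ)
    (l : W) : ℝ :=
  dualFunction f A l + ρ / 2 * ⟪l, M l⟫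

theorem StrongConvexOn.hasGradientAt_regularizedDualFunction (hμ : 0 < μ)
    (hsc : StrongConvexOn univ μ f) (hf : ∀ x, HasGradientAt f (f' x) x) (hM : M.IsSymmetric)
    {xs : W → E} (hxs : ∀ l, f' (xs l) = -A.adjoint l) (l : W) :
    HasGradientAt (regularizedDualFunction f A M ρ) (-A (xs l) + ρ • M l) l :=
  (hsc.hasGradientAt_dualFunction hμ hf hxs l).add (hM.hasGradientAt_half_mul_inner_apply ρ l)

theorem StrongConvexOn.differentiable_regularizedDualFunction (hμ : 0 < μ)
    (hsc : StrongConvexOn univ μ f) (hf : ∀ x, HasGradientAt f (f' x) x) (hM : M.IsSymmetric) :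
    Differentiable ℝ (regularizedDualFunction f A M ρ) := by
  choose xs hxs using fun l => hsc.surjective_of_hasGradientAt hμ hf (-A.adjoint l)
  exact fun l => (hsc.hasGradientAt_regularizedDualFunction hμ hf hM hxs l).differentiableAt

theorem StrongConvexOn.inner_gradient_regularizedDualFunction_sub_eq (hμ : 0 < μ)
    (hsc : StrongConvexOn univ μ f) (hf : ∀ x, HasGradientAt f (f' x) x) (hM : M.IsSymmetric)
    {xs : W → E} (hxs : ∀ l, f' (xs l) = -A.adjoint l) (l l' : W) :
    ⟪gradient (regularizedDualFunction f A M ρ) l -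
        gradient (regularizedDualFunction f A M ρ) l', l - l'⟫ =
      ⟪f' (xs l') - f' (xs l), xs l' - xs l⟫ + ρ * ⟪M (l - l'), l - l'⟫ := by
  rw [(hsc.hasGradientAt_regularizedDualFunction hμ hf hM hxs l).gradient,
    (hsc.hasGradientAt_regularizedDualFunction hμ hf hM hxs l').gradient]
  have hvec : (-A (xs l) + ρ • M l) - (-A (xs l') + ρ • M l') =
      A (xs l' - xs l) + ρ • M (l - l') := by
    rw [map_sub, map_sub]
    module
  have hadj : A.adjoint (l - l') = f' (xs l') - f' (xs l) := by
    rw [map_sub, hxs, hxs]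
    abel
  rw [hvec, inner_add_left, real_inner_smul_left, ← LinearMap.adjoint_inner_right, hadj,
    real_inner_comm (xs l' - xs l)]

theorem StrongConvexOn.inner_gradient_regularizedDualFunction_sub_nonneg (hμ : 0 < μ)
    (hsc : StrongConvexOn univ μ f) (hf : ∀ x, HasGradientAt f (f' x) x) (hM : M.IsPositive)
    (hρ : 0 ≤ ρ) (l l' : W) :
    0 ≤ ⟪gradient (regularizedDualFunction f A M ρ) l -
        gradient (regularizedDualFunction f A M ρ) l', l - l'⟫ := by
  choose xs hxs using fun l => hsc.surjective_of_hasGradientAt hμ hf (-A.adjoint l)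
  rw [hsc.inner_gradient_regularizedDualFunction_sub_eq hμ hf hM.isSymmetric hxs]
  have hconv : ConvexOn ℝ univ f := hsc.convexOn fun r => by positivity
  exact add_nonneg (hconv.inner_sub_nonneg_of_hasGradientAt hf _ _)
    (mul_nonneg hρ (hM.inner_nonneg_left _))

theorem StrongConvexOn.inv_mul_le_inner_gradient_regularizedDualFunction_sub (hμ : 0 < μ)
    (hsc : StrongConvexOn univ μ f) (hf : ∀ x, HasGradientAt f (f' x) x)
    (hlip : ∀ x y, ‖f' x - f' y‖ ≤ L * ‖x - y‖) (hM : M.IsPositive) (hρ : 0 ≤ ρ) (l l' : W) :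
    L⁻¹ * (‖A.adjoint (l - l')‖ ^ 2 + ρ * L * ⟪M (l - l'), l - l'⟫) ≤
      ⟪gradient (regularizedDualFunction f A M ρ) l -
        gradient (regularizedDualFunction f A M ρ) l', l - l'⟫ := by
  choose xs hxs using fun l => hsc.surjective_of_hasGradientAt hμ hf (-A.adjoint l)
  rw [hsc.inner_gradient_regularizedDualFunction_sub_eq hμ hf hM.isSymmetric hxs]
  have hconv : ConvexOn ℝ univ f := hsc.convexOn fun r => by positivity
  have hadj : A.adjoint (l - l') = f' (xs l') - f' (xs l) := by
    rw [map_sub, hxs, hxs]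
    abel
  have hdual := hconv.inv_mul_sq_le_inner_sub_of_lipschitz_gradient hf hlip (xs l') (xs l)
  have hreg : L⁻¹ * (ρ * L * ⟪M (l - l'), l - l'⟫) ≤ ρ * ⟪M (l - l'), l - l'⟫ := by
    have hq := mul_nonneg hρ (hM.inner_nonneg_left (l - l'))
    rcases eq_or_ne L 0 with rfl | hL
    · simpa using hq
    · rw [show L⁻¹ * (ρ * L * ⟪M (l - l'), l - l'⟫) = ρ * ⟪M (l - l'), l - l'⟫ by field_simp]
  rw [hadj, mul_add]
  exact add_le_add hdual hreg

theorem StrongConvexOn.strongConvexOn_regularizedDualFunction (hμ : 0 < μ)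
    (hsc : StrongConvexOn univ μ f) (hf : ∀ x, HasGradientAt f (f' x) x)
    (hlip : ∀ x y, ‖f' x - f' y‖ ≤ L * ‖x - y‖) (hM : M.IsPositive) (hρ : 0 ≤ ρ) {c : ℝ}
    (hc : 0 ≤ c) (hcM : ∀ v, c * ‖v‖ ^ 2 ≤ ‖A.adjoint v‖ ^ 2 + ρ * L * ⟪M v, v⟫) :
    StrongConvexOn univ (c / L) (regularizedDualFunction f A M ρ) := by
  refine strongConvexOn_univ_of_mul_sq_le_inner_sub
    (fun l => (hsc.differentiable_regularizedDualFunction hμ hf hM.isSymmetric l).hasGradientAt)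
    fun l l' => ?_
  rcases le_or_gt L 0 with hL | hL
  · calc c / L * ‖l - l'‖ ^ 2 ≤ 0 :=
          mul_nonpos_of_nonpos_of_nonneg (div_nonpos_of_nonneg_of_nonpos hc hL) (sq_nonneg _)
      _ ≤ _ := hsc.inner_gradient_regularizedDualFunction_sub_nonneg hμ hf hM hρ l l'
  calc c / L * ‖l - l'‖ ^ 2 = L⁻¹ * (c * ‖l - l'‖ ^ 2) := by ring
    _ ≤ L⁻¹ * (‖A.adjoint (l - l')‖ ^ 2 + ρ * L * ⟪M (l - l'), l - l'⟫) := by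
      gcongr
      exact hcM _
    _ ≤ _ := hsc.inv_mul_le_inner_gradient_regularizedDualFunction_sub hμ hf hlip hM hρ l l'

end RegularizedDualFunction

section Matrix

theorem inner_toEuclideanLin_mul_transpose_add_smul {m n : Type*} [Fintype m] [DecidableEq m]
    [Fintype n] [DecidableEq n] (A : Matrix m n ℝ) (M : Matrix m m ℝ) (c : ℝ)
    (v : EuclideanSpace ℝ m) :
    ⟪toEuclideanLin (A * Aᵀ + c • M) v, v⟫ =
      ‖(toEuclideanLin A).adjoint v‖ ^ 2 + c * ⟪toEuclideanLin M v, v⟫ := by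
  rw [map_add, map_smul, LinearMap.add_apply, LinearMap.smul_apply, inner_add_left,
    real_inner_smul_left, toLpLin_mul, ← conjTranspose_eq_transpose_of_trivial,
    toEuclideanLin_conjTranspose_eq_adjoint, LinearMap.comp_apply,
    ← LinearMap.adjoint_inner_right, real_inner_self_eq_norm_sq]

variable {m : ℕ} {Q : Matrix (Fin m) (Fin m) ℝ}

theorem lambdaMin_nonneg (hQ : Q.PosSemidef) : 0 ≤ lambdaMin Q :=
  Real.sInf_nonneg <| forall_mem_image.2 fun v _ =>
    (isPositive_toEuclideanLin_iff.2 hQ).inner_nonneg_left v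

theorem lambdaMin_mul_norm_sq_le (hQ : Q.PosSemidef) (v : EuclideanSpace ℝ (Fin m)) :
    lambdaMin Q * ‖v‖ ^ 2 ≤ ⟪toEuclideanLin Q v, v⟫ := by
  rcases eq_or_ne v 0 with rfl | hv
  · simp
  have hbdd : BddBelow ((fun v : EuclideanSpace ℝ (Fin m) => ⟪toEuclideanLin Q v, v⟫) ''
      {v | ‖v‖ = 1}) :=
    ⟨0, forall_mem_image.2 fun w _ => (isPositive_toEuclideanLin_iff.2 hQ).inner_nonneg_left w⟩
  have hle := csInf_le hbdd (mem_image_of_mem _ (norm_smul_inv_norm (𝕜 := ℝ) hv))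
  rw [map_smul, real_inner_smul_left, real_inner_smul_right] at hle
  have hv' : ‖v‖ ≠ 0 := norm_ne_zero_iff.2 hv
  calc lambdaMin Q * ‖v‖ ^ 2
      ≤ (‖v‖⁻¹ * (‖v‖⁻¹ * ⟪toEuclideanLin Q v, v⟫)) * ‖v‖ ^ 2 := by
        gcongr
        exact hle
    _ = ⟪toEuclideanLin Q v, v⟫ := by field_simp

end Matrix

theorem stmt2_general {d m : ℕ} (μ L ρ : ℝ) (hμ : 0 < μ) (hρ : 0 < ρ)
    (f : EuclideanSpace ℝ (Fin d) → ℝ)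
    (hf : ConvexOn ℝ Set.univ (fun x => f x - μ / 2 * ‖x‖ ^ 2))
    (hfd : Differentiable ℝ f)
    (hfs : ∀ x y : EuclideanSpace ℝ (Fin d), ‖gradient f x - gradient f y‖ ≤ L * ‖x - y‖)
    (A : Matrix (Fin m) (Fin d) ℝ)
    (M : Matrix (Fin m) (Fin m) ℝ) (hMpsd : M.PosSemidef)
    (Φ : EuclideanSpace ℝ (Fin m) → ℝ)
    (hΦ : ∀ lam, Φ lam = (⨆ x : EuclideanSpace ℝ (Fin d),
        (-⟪lam, Matrix.toEuclideanLin A x⟫ - f x))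
      + ρ / 2 * ⟪lam, Matrix.toEuclideanLin M lam⟫) :
    Differentiable ℝ Φ ∧
    (∀ lam lam' : EuclideanSpace ℝ (Fin m),
        (1 / L) * ⟪Matrix.toEuclideanLin (A * Aᵀ + (ρ * L) • M) (lam - lam'), lam - lam'⟫
          ≤ ⟪gradient Φ lam - gradient Φ lam', lam - lam'⟫) ∧
    ((A * Aᵀ + (ρ * L) • M).PosDef →
      ConvexOn ℝ Set.univ
        (fun lam => Φ lam - lambdaMin (A * Aᵀ + (ρ * L) • M) / L / 2 * ‖lam‖ ^ 2)) := by
  have hsc : StrongConvexOn univ μ f := strongConvexOn_iff_convex.2 hf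
  have hgrad (x : EuclideanSpace ℝ (Fin d)) := (hfd x).hasGradientAt
  have hM := isPositive_toEuclideanLin_iff.2 hMpsd
  have hQ := inner_toEuclideanLin_mul_transpose_add_smul A M (ρ * L)
  obtain rfl : Φ = regularizedDualFunction f (toEuclideanLin A) (toEuclideanLin M) ρ := funext hΦ
  refine ⟨hsc.differentiable_regularizedDualFunction hμ hgrad hM.isSymmetric, fun l l' => ?_,
    fun hPD => ?_⟩
  · rw [one_div, hQ]
    exact hsc.inv_mul_le_inner_gradient_regularizedDualFunction_sub hμ hgrad hfs hM hρ.le l l'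
  · refine strongConvexOn_iff_convex.1 (hsc.strongConvexOn_regularizedDualFunction hμ hgrad hfs hM
      hρ.le (lambdaMin_nonneg hPD.posSemidef) fun v => ?_)
    rw [← hQ]
    exact lambdaMin_mul_norm_sq_le hPD.posSemidef v

/-- Let `f : ℝ^d → ℝ` be `μ`-strongly convex (`μ > 0`) and `L`-smooth, `A` an `m × d`
matrix, `M` a symmetric positive semidefinite `m × m` matrix, `ρ > 0`, and
`Φ(λ) = sup_x (−⟪λ, A x⟫ − f x) + (ρ/2)⟪λ, M λ⟫`.  Then `Φ` is differentiable and
`⟪∇Φ(λ) − ∇Φ(λ'), λ − λ'⟫ ≥ (1/L)(λ − λ')ᵀ (A Aᵀ + ρ L M)(λ − λ')` for all `λ, λ'`.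
In particular, if `A Aᵀ + ρ L M` is positive definite, then `Φ` is
`(λmin(A Aᵀ + ρ L M)/L)`-strongly convex. -/
theorem stmt2 {d m : ℕ} (μ L ρ : ℝ) (hμ : 0 < μ) (hρ : 0 < ρ)
    (f : EuclideanSpace ℝ (Fin d) → ℝ)
    (hf : ConvexOn ℝ Set.univ (fun x => f x - μ / 2 * ‖x‖ ^ 2))
    (hfd : Differentiable ℝ f)
    (hfs : ∀ x y : EuclideanSpace ℝ (Fin d), ‖gradient f x - gradient f y‖ ≤ L * ‖x - y‖)
    (A : Matrix (Fin m) (Fin d) ℝ)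
    (M : Matrix (Fin m) (Fin m) ℝ) (hMsymm : M.IsSymm) (hMpsd : M.PosSemidef)
    (Φ : EuclideanSpace ℝ (Fin m) → ℝ)
    (hΦ : ∀ lam, Φ lam = (⨆ x : EuclideanSpace ℝ (Fin d),
        (-⟪lam, Matrix.toEuclideanLin A x⟫ - f x))
      + ρ / 2 * ⟪lam, Matrix.toEuclideanLin M lam⟫) :
    Differentiable ℝ Φ ∧
    (∀ lam lam' : EuclideanSpace ℝ (Fin m),
        (1 / L) * ⟪Matrix.toEuclideanLin (A * Aᵀ + (ρ * L) • M) (lam - lam'), lam - lam'⟫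
          ≤ ⟪gradient Φ lam - gradient Φ lam', lam - lam'⟫) ∧
    ((A * Aᵀ + (ρ * L) • M).PosDef →
      ConvexOn ℝ Set.univ
        (fun lam => Φ lam - lambdaMin (A * Aᵀ + (ρ * L) • M) / L / 2 * ‖lam‖ ^ 2)) :=
  stmt2_general μ L ρ hμ hρ f hf hfd hfs A M hMpsd Φ hΦ
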